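/- Let φ : ℚ[y1,y6,y10] → ℚ[y1,y6,y10] be the ℚ-algebra endomorphism determined by φ(y1) = k*y1, φ(y6) = a1*y1^6 + a2*y6, and φ(y10) = b1*y1^10 + b2*y1^4*y6 + b3*y10, where k, a1, a2, b1, b2, b3 ∈ ℚ. If φ(g20) ∈ I, φ(g24) ∈ I and φ(g30) ∈ I, then a1 = 0, b1 = 0, b2 = 0, a2 = k^6 and b3 = k^10. (This is the rigidity computation for X = E8/E7·S1: every degree-preserving endomorphism of H*(X;ℚ) sending the Kaehlerian class y1 to k*y1 is the Adams operator ψ^k.) -/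

import Mathlib

/-!
Grade `ℚ[y1, y6, y10]` by `deg y1 = 1`, `deg y6 = 6`, `deg y10 = 10`. Then `g20, g24, g30` are
homogeneous of degrees `20, 24, 30` and `φ` preserves degrees, so `φ(g20) = c • g20` and
`φ(g24) = h * g20 + c' • g24` for scalars `c, c'`. Setting `y1 = 1, y6 = s, y10 = t` turns these
into identities between polynomial functions of `s, t`: comparing coefficients in the first, and
evaluating the second at three rational points of the curve `g20(1, s, t) = 0`, leaves a polynomial
system in `k, aᵢ, bᵢ`. The case `k = 0` is immediate, and for `k ≠ 0` the homogeneity of the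
relations rescales the system to `k = 1`. There the Adams operation is the only rational solution:
the other branches need a rational root of `38 x² - 171 x + 93` (discriminant `15105`, not a square)
or a common rational zero of `g20(1, a, b)` and `g24(1, a, b)`, whose resultant in `b` is an octic
in `a` without rational roots (already mod `2`).
-/

open MvPolynomial

section WeightedHomogeneous

variable {σ R : Type*} [CommSemiring R] {w : σ → ℕ}

attribute [local instance] weightedGradedAlgebra in
theorem weightedHomogeneousComponent_mul_of_isWeightedHomogeneous {p q : MvPolynomial σ R}
    {m : ℕ} (hq : IsWeightedHomogeneous w q m) (n : ℕ) :
    weightedHomogeneousComponent w n (p * q) =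
      if m ≤ n then weightedHomogeneousComponent w (n - m) p * q else 0 := by
  simp only [← weightedDecomposition.decompose'_apply]
  exact DirectSum.coe_decompose_mul_of_right_mem _ n hq

variable {f g g' g'' : MvPolynomial σ R} {n n' n'' : ℕ}

theorem IsWeightedHomogeneous.exists_eq_C_mul_of_mem_span (hw : ∀ i, w i ≠ 0)
    (hf : IsWeightedHomogeneous w f n) (hg : IsWeightedHomogeneous w g n)
    (hg' : IsWeightedHomogeneous w g' n') (hg'' : IsWeightedHomogeneous w g'' n'')
    (hn' : n < n') (hn'' : n < n'') (hmem : f ∈ Ideal.span {g, g', g''}) :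
    ∃ c, f = C c * g := by
  obtain ⟨p, z, hz, rfl⟩ := Ideal.mem_span_insert.mp hmem
  obtain ⟨q, q', rfl⟩ := Ideal.mem_span_pair.mp hz
  refine ⟨coeff 0 p, ?_⟩
  rw [← hf.weightedHomogeneousComponent_same, map_add, map_add,
    weightedHomogeneousComponent_mul_of_isWeightedHomogeneous hg,
    weightedHomogeneousComponent_mul_of_isWeightedHomogeneous hg',
    weightedHomogeneousComponent_mul_of_isWeightedHomogeneous hg'']
  simp [hn'.not_ge, hn''.not_ge, weightedHomogeneousComponent_zero _ hw]

theorem IsWeightedHomogeneous.exists_eq_mul_add_C_mul_of_mem_span (hw : ∀ i, w i ≠ 0)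
    (hf : IsWeightedHomogeneous w f n') (hg : IsWeightedHomogeneous w g n)
    (hg' : IsWeightedHomogeneous w g' n') (hg'' : IsWeightedHomogeneous w g'' n'')
    (hn : n ≤ n') (hn'' : n' < n'') (hmem : f ∈ Ideal.span {g, g', g''}) :
    ∃ h c, f = h * g + C c * g' := by
  obtain ⟨p, z, hz, rfl⟩ := Ideal.mem_span_insert.mp hmem
  obtain ⟨q, q', rfl⟩ := Ideal.mem_span_pair.mp hz
  refine ⟨weightedHomogeneousComponent w (n' - n) p, coeff 0 q, ?_⟩
  rw [← hf.weightedHomogeneousComponent_same, map_add, map_add,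
    weightedHomogeneousComponent_mul_of_isWeightedHomogeneous hg,
    weightedHomogeneousComponent_mul_of_isWeightedHomogeneous hg',
    weightedHomogeneousComponent_mul_of_isWeightedHomogeneous hg'']
  simp [hn, hn''.not_ge, weightedHomogeneousComponent_zero _ hw]

theorem isWeightedHomogeneous_ofNat (w : σ → ℕ) (n : ℕ) [n.AtLeastTwo] :
    IsWeightedHomogeneous w (OfNat.ofNat n : MvPolynomial σ R) 0 := by
  rw [← map_ofNat C n]
  exact isWeightedHomogeneous_C w _

end WeightedHomogeneous

namespace E8E7

/-- Half the cohomological degrees of `y1, y6, y10`. -/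
def deg : Fin 3 → ℕ := ![1, 6, 10]

/-! The relations `g20, g24, g30` as expressions in `y1, y6, y10` over any commutative ring, so
that they can be specialised both to polynomials and to numbers. -/

section Relations

variable {A : Type*} [CommRing A]

def rel20 (y1 y6 y10 : A) : A :=
  3 * y10 ^ 2 + 10 * y1 ^ 2 * y6 ^ 3 + 18 * y1 ^ 4 * y6 * y10
    - 12 * y1 ^ 10 * y10 - 18 * y1 ^ 8 * y6 ^ 2 + 9 * y1 ^ 14 * y6 - y1 ^ 20

def rel24 (y1 y6 y10 : A) : A :=
  5 * y6 ^ 4 + 30 * y1 ^ 2 * y6 ^ 2 * y10 + 15 * y1 ^ 4 * y10 ^ 2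
    - 15 * y1 ^ 14 * y10 - 15 * y1 ^ 12 * y6 ^ 2 + 10 * y1 ^ 18 * y6 - y1 ^ 24

def rel30 (y1 y6 y10 : A) : A :=
  12 * y1 ^ 4 * y6 * y10 ^ 2 + 24 * y1 ^ 14 * y6 * y10 + 56 * y1 ^ 24 * y6
    - 36 * y1 ^ 10 * y10 ^ 2 - 32 * y10 ^ 3 + 4 * y6 ^ 5 - 9 * y1 ^ 30
    - 48 * y1 ^ 20 * y10 + 60 * y1 ^ 6 * y6 ^ 4 - 64 * y1 ^ 18 * y6 ^ 2
    + 96 * y1 ^ 8 * y10 * y6 ^ 2 - 44 * y1 ^ 12 * y6 ^ 3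

theorem map_rel20 {B F : Type*} [CommRing B] [FunLike F A B] [RingHomClass F A B] (f : F)
    (y1 y6 y10 : A) : f (rel20 y1 y6 y10) = rel20 (f y1) (f y6) (f y10) := by
  simp only [rel20, map_add, map_sub, map_mul, map_pow, map_ofNat]

theorem map_rel24 {B F : Type*} [CommRing B] [FunLike F A B] [RingHomClass F A B] (f : F)
    (y1 y6 y10 : A) : f (rel24 y1 y6 y10) = rel24 (f y1) (f y6) (f y10) := by
  simp only [rel24, map_add, map_sub, map_mul, map_pow, map_ofNat]

theorem rel20_mul_pow (k y1 y6 y10 : A) :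
    rel20 (k * y1) (k ^ 6 * y6) (k ^ 10 * y10) = k ^ 20 * rel20 y1 y6 y10 := by
  unfold rel20; ring

theorem rel24_mul_pow (k y1 y6 y10 : A) :
    rel24 (k * y1) (k ^ 6 * y6) (k ^ 10 * y10) = k ^ 24 * rel24 y1 y6 y10 := by
  unfold rel24; ring

end Relations

section Homogeneous

variable {σ R : Type*} [CommRing R] {w : σ → ℕ} {y1 y6 y10 : MvPolynomial σ R}
  (h1 : IsWeightedHomogeneous w y1 1) (h6 : IsWeightedHomogeneous w y6 6)
  (h10 : IsWeightedHomogeneous w y10 10)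
include h1 h6 h10

theorem isWeightedHomogeneous_rel20 : IsWeightedHomogeneous w (rel20 y1 y6 y10) 20 := by
  have c := isWeightedHomogeneous_ofNat (R := R) w
  exact (((((((c 3).mul (h10.pow 2)).add (((c 10).mul (h1.pow 2)).mul (h6.pow 3))).add
    ((((c 18).mul (h1.pow 4)).mul h6).mul h10)).sub (((c 12).mul (h1.pow 10)).mul h10)).sub
    (((c 18).mul (h1.pow 8)).mul (h6.pow 2))).add (((c 9).mul (h1.pow 14)).mul h6)).sub (h1.pow 20)

theorem isWeightedHomogeneous_rel24 : IsWeightedHomogeneous w (rel24 y1 y6 y10) 24 := by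
  have c := isWeightedHomogeneous_ofNat (R := R) w
  exact (((((((c 5).mul (h6.pow 4)).add ((((c 30).mul (h1.pow 2)).mul (h6.pow 2)).mul h10)).add
    (((c 15).mul (h1.pow 4)).mul (h10.pow 2))).sub (((c 15).mul (h1.pow 14)).mul h10)).sub
    (((c 15).mul (h1.pow 12)).mul (h6.pow 2))).add (((c 10).mul (h1.pow 18)).mul h6)).sub (h1.pow 24)

theorem isWeightedHomogeneous_rel30 : IsWeightedHomogeneous w (rel30 y1 y6 y10) 30 := by
  have c := isWeightedHomogeneous_ofNat (R := R) w
  exact ((((((((((((((c 12).mul (h1.pow 4)).mul h6).mul (h10.pow 2)).add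
    ((((c 24).mul (h1.pow 14)).mul h6).mul h10)).add (((c 56).mul (h1.pow 24)).mul h6)).sub
    (((c 36).mul (h1.pow 10)).mul (h10.pow 2))).sub ((c 32).mul (h10.pow 3))).add
    ((c 4).mul (h6.pow 5))).sub ((c 9).mul (h1.pow 30))).sub
    (((c 48).mul (h1.pow 20)).mul h10)).add (((c 60).mul (h1.pow 6)).mul (h6.pow 4))).sub
    (((c 64).mul (h1.pow 18)).mul (h6.pow 2))).add ((((c 96).mul (h1.pow 8)).mul h10).mul
    (h6.pow 2))).sub (((c 44).mul (h1.pow 12)).mul (h6.pow 3))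

end Homogeneous

theorem quadratic_ne_zero (q : ℚ) : 38 * q ^ 2 - 171 * q + 93 ≠ 0 := by
  intro h
  have h15105 : ¬ IsSquare (15105 : ℚ) := by
    rw [show (15105 : ℚ) = ((15105 : ℕ) : ℚ) by norm_num, Rat.isSquare_natCast_iff]
    rintro ⟨r, hr⟩
    exact Nat.not_exists_sq (m := 122) (by norm_num) (by norm_num) ⟨r, hr.symm⟩
  exact h15105 ⟨76 * q - 171, by linear_combination -152 * h⟩

theorem octic_ne_zero (q : ℚ) :
    225 * q ^ 8 + 14400 * q ^ 7 - 70650 * q ^ 6 + 122400 * q ^ 5 - 98415 * q ^ 4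
      + 34470 * q ^ 3 - 315 * q ^ 2 - 2925 * q + 549 ≠ 0 := by
  intro h
  have hZ : 225 * q.num ^ 8 + 14400 * q.num ^ 7 * q.den - 70650 * q.num ^ 6 * q.den ^ 2
      + 122400 * q.num ^ 5 * q.den ^ 3 - 98415 * q.num ^ 4 * q.den ^ 4
      + 34470 * q.num ^ 3 * q.den ^ 5 - 315 * q.num ^ 2 * q.den ^ 6
      - 2925 * q.num * q.den ^ 7 + 549 * (q.den : ℤ) ^ 8 = 0 := by
    rw [← Int.cast_inj (α := ℚ)]
    push_cast
    rw [← Rat.mul_den_eq_num q]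
    linear_combination (q.den : ℚ) ^ 8 * h
  have h2 := congrArg (Int.cast : ℤ → ZMod 2) hZ
  push_cast at h2
  -- Modulo 2 the homogenised octic is `x⁸ + x⁴y⁴ + x²y⁶ + xy⁷ + y⁸`, odd unless `2 ∣ x, y`.
  obtain ⟨hn, hd⟩ := (by decide : ∀ x y : ZMod 2, 225 * x ^ 8 + 14400 * x ^ 7 * y
      - 70650 * x ^ 6 * y ^ 2 + 122400 * x ^ 5 * y ^ 3 - 98415 * x ^ 4 * y ^ 4
      + 34470 * x ^ 3 * y ^ 5 - 315 * x ^ 2 * y ^ 6 - 2925 * x * y ^ 7 + 549 * y ^ 8 = 0 →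
        x = 0 ∧ y = 0) _ _ h2
  rw [ZMod.intCast_zmod_eq_zero_iff_dvd] at hn
  rw [ZMod.natCast_eq_zero_iff] at hd
  exact Nat.not_coprime_of_dvd_of_dvd one_lt_two (Int.ofNat_dvd_left.mp hn) hd q.reduced

theorem not_rel20_eq_zero_and_rel24_eq_zero (a b : ℚ) :
    ¬ (rel20 1 a b = 0 ∧ rel24 1 a b = 0) := by
  rintro ⟨h20, h24⟩
  unfold rel20 at h20
  unfold rel24 at h24
  apply octic_ne_zero a
  linear_combination (2475 * a ^ 4 + 1350 * a ^ 2 * b - 5850 * a ^ 3 - 4050 * a * b - 675 * a ^ 2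
      + 2025 * b + 5625 * a - 2205) * h20
    + (45 * a ^ 4 - 270 * a ^ 2 * b - 2070 * a ^ 3 + 810 * a * b + 6615 * a ^ 2 - 405 * b
      - 5985 * a + 1656) * h24

section Identities

variable {K : Type*} [Field K] {k a1 a2 b1 b2 b3 c c' : K}

/-- What `φ(g20) = c • g20` and `φ(g24) ∈ c' • g24 + (g20)` say at `y1 = 1, y6 = s, y10 = t`,
for `φ(y1) = k y1`, `φ(y6) = a1 y1⁶ + a2 y6`, `φ(y10) = b1 y1¹⁰ + b2 y1⁴ y6 + b3 y10`. -/
structure RelIdentities (k a1 a2 b1 b2 b3 c c' : K) : Prop where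
  rel20_eq : ∀ s t, rel20 k (a1 + a2 * s) (b1 + b2 * s + b3 * t) = c * rel20 1 s t
  rel24_eq : ∀ s t, rel20 (1 : K) s t = 0 →
    rel24 k (a1 + a2 * s) (b1 + b2 * s + b3 * t) = c' * rel24 1 s t

/-- The coefficients of `1, s, s², s³, t, t², s t`. -/
theorem coefficients_of_forall_rel20_eq [CharZero K]
    (h : ∀ s t : K, rel20 k (a1 + a2 * s) (b1 + b2 * s + b3 * t) = c * rel20 1 s t) :
    3 * b1 ^ 2 + 10 * k ^ 2 * a1 ^ 3 + 18 * k ^ 4 * a1 * b1 - 12 * k ^ 10 * b1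
        - 18 * k ^ 8 * a1 ^ 2 + 9 * k ^ 14 * a1 - k ^ 20 = -c ∧
      6 * b1 * b2 + 30 * k ^ 2 * a1 ^ 2 * a2 + 18 * k ^ 4 * (a2 * b1 + a1 * b2)
        - 36 * k ^ 8 * a1 * a2 - 12 * k ^ 10 * b2 + 9 * k ^ 14 * a2 = 9 * c ∧
      3 * b2 ^ 2 + 30 * k ^ 2 * a1 * a2 ^ 2 + 18 * k ^ 4 * a2 * b2 - 18 * k ^ 8 * a2 ^ 2
        = -18 * c ∧
      10 * k ^ 2 * a2 ^ 3 = 10 * c ∧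
      6 * b1 * b3 + 18 * k ^ 4 * a1 * b3 - 12 * k ^ 10 * b3 = -12 * c ∧
      3 * b3 ^ 2 = 3 * c ∧
      6 * b2 * b3 + 18 * k ^ 4 * a2 * b3 = 18 * c := by
  have v00 := h 0 0
  have v10 := h 1 0
  have vm10 := h (-1) 0
  have v20 := h 2 0
  have v01 := h 0 1
  have v0m1 := h 0 (-1)
  have v11 := h 1 1
  simp only [rel20] at v00 v10 vm10 v20 v01 v0m1 v11
  refine ⟨?_, ?_, ?_, ?_, ?_, ?_, ?_⟩
  · linear_combination v00
  · linear_combination -v00 / 2 + v10 - vm10 / 3 - v20 / 6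
  · linear_combination -v00 + v10 / 2 + vm10 / 2
  · linear_combination v00 / 2 - v10 / 2 - vm10 / 6 + v20 / 6
  · linear_combination v01 / 2 - v0m1 / 2
  · linear_combination -v00 + v01 / 2 + v0m1 / 2
  · linear_combination v00 - v10 - v01 + v11

namespace RelIdentities

theorem eq_zero_of_zero [CharZero K] (h : RelIdentities 0 a1 a2 b1 b2 b3 c c') :
    a1 = 0 ∧ b1 = 0 ∧ b2 = 0 ∧ a2 = 0 ∧ b3 = 0 := by
  obtain ⟨e00, -, e20, e30, -, e02, -⟩ := coefficients_of_forall_rel20_eq h.rel20_eq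
  have hc : c = 0 := by linear_combination -e30 / 10
  obtain rfl : b1 = 0 := pow_eq_zero_iff two_ne_zero |>.mp (by linear_combination e00 / 3 - hc / 3)
  obtain rfl : b2 = 0 := pow_eq_zero_iff two_ne_zero |>.mp (by linear_combination e20 / 3 - 6 * hc)
  obtain rfl : b3 = 0 := pow_eq_zero_iff two_ne_zero |>.mp (by linear_combination e02 / 3 + hc)
  have f1 := h.rel24_eq 1 0 (by norm_num [rel20])
  have f2 := h.rel24_eq 1 (-2) (by norm_num [rel20])
  have f3 := h.rel24_eq (5 / 8) (3 / 16) (by norm_num [rel20])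
  simp only [rel24] at f1 f2 f3
  have hc' : c' = 0 := by linear_combination (f1 - f2) / 30
  have h1 : a1 + a2 = 0 := pow_eq_zero_iff (n := 4) (by norm_num) |>.mp
    (by linear_combination f1 / 5 - hc' / 5)
  have h2 : a1 + 5 / 8 * a2 = 0 := pow_eq_zero_iff (n := 4) (by norm_num) |>.mp
    (by linear_combination f3 / 5 + 269 / 20480 * hc')
  exact ⟨by linear_combination (8 * h2 - 5 * h1) / 3, rfl, rfl,
    by linear_combination 8 * (h1 - h2) / 3, rfl⟩

theorem normalize (h : RelIdentities k a1 a2 b1 b2 b3 c c') (hk : k ≠ 0) :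
    RelIdentities 1 (a1 / k ^ 6) (a2 / k ^ 6) (b1 / k ^ 10) (b2 / k ^ 10) (b3 / k ^ 10)
      (c / k ^ 20) (c' / k ^ 24) := by
  have hy6 (s : K) : k ^ 6 * (a1 / k ^ 6 + a2 / k ^ 6 * s) = a1 + a2 * s := by field_simp
  have hy10 (s t : K) : k ^ 10 * (b1 / k ^ 10 + b2 / k ^ 10 * s + b3 / k ^ 10 * t) =
      b1 + b2 * s + b3 * t := by field_simp
  constructor
  · intro s t
    have e := rel20_mul_pow k 1 (a1 / k ^ 6 + a2 / k ^ 6 * s)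
      (b1 / k ^ 10 + b2 / k ^ 10 * s + b3 / k ^ 10 * t)
    rw [mul_one, hy6, hy10, h.rel20_eq] at e
    apply mul_left_cancel₀ (pow_ne_zero 20 hk)
    rw [← e]
    field_simp
  · intro s t hst
    have e := rel24_mul_pow k 1 (a1 / k ^ 6 + a2 / k ^ 6 * s)
      (b1 / k ^ 10 + b2 / k ^ 10 * s + b3 / k ^ 10 * t)
    rw [mul_one, hy6, hy10, h.rel24_eq s t hst] at e
    apply mul_left_cancel₀ (pow_ne_zero 24 hk)
    rw [← e]
    field_simp

end RelIdentities

end Identities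

namespace RelIdentities

variable {a1 a2 b1 b2 b3 c c' : ℚ}

theorem b3_ne_zero_of_one (h : RelIdentities 1 a1 a2 b1 b2 b3 c c') : b3 ≠ 0 := by
  rintro rfl
  obtain ⟨e00, -, e20, e30, -, e02, -⟩ := coefficients_of_forall_rel20_eq h.rel20_eq
  have hc : c = 0 := by linear_combination -e02 / 3
  obtain rfl : a2 = 0 := pow_eq_zero_iff three_ne_zero |>.mp (by linear_combination e30 / 10 + hc)
  obtain rfl : b2 = 0 := pow_eq_zero_iff two_ne_zero |>.mp (by linear_combination e20 / 3 - 6 * hc)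
  have f1 := h.rel24_eq 1 0 (by norm_num [rel20])
  have f2 := h.rel24_eq 1 (-2) (by norm_num [rel20])
  simp only [zero_mul, add_zero] at f1 f2
  rw [show rel24 (1 : ℚ) 1 0 = -1 by norm_num [rel24]] at f1
  rw [show rel24 (1 : ℚ) 1 (-2) = 29 by norm_num [rel24]] at f2
  refine not_rel20_eq_zero_and_rel24_eq_zero a1 b1 ⟨?_, ?_⟩
  · unfold rel20
    linear_combination e00 - hc
  · linear_combination (29 * f1 + f2) / 30

theorem eq_of_one (h : RelIdentities 1 a1 a2 b1 b2 b3 c c') :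
    a1 = 0 ∧ b1 = 0 ∧ b2 = 0 ∧ a2 = 1 ∧ b3 = 1 := by
  have hb3 := h.b3_ne_zero_of_one
  obtain ⟨e00, e10, e20, e30, e01, e02, e11⟩ := coefficients_of_forall_rel20_eq h.rel20_eq
  have hb2 : b2 = 3 * b3 - 3 * a2 := by
    have := (mul_eq_zero.mp (by linear_combination e11 - 6 * e02 :
      b3 * (6 * b2 + 18 * a2 - 18 * b3) = 0)).resolve_left hb3
    linear_combination this / 6
  have hb1 : b1 = 2 - 2 * b3 - 3 * a1 := by
    have := (mul_eq_zero.mp (by linear_combination e01 + 4 * e02 :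
      b3 * (6 * b1 + 18 * a1 - 12 + 12 * b3) = 0)).resolve_left hb3
    linear_combination this / 6
  have ha2 : a2 ≠ 0 := by
    rintro rfl
    exact hb3 (pow_eq_zero_iff two_ne_zero |>.mp (by linear_combination e02 / 3 - e30 / 10))
  subst hb1 hb2
  obtain rfl : a2 = 1 - 2 / 3 * a1 := by
    have := (mul_eq_zero.mp (by linear_combination e20 + 9 / 2 * e30 - 9 * e02 :
      15 * a2 ^ 2 * (3 * a2 - 3 + 2 * a1) = 0)).resolve_left (by positivity)
    linear_combination this / 3
  obtain rfl : a1 = 0 := (mul_eq_zero.mp (by linear_combination 9 * e00 + 13 / 5 * e10 - 24 / 5 * e02 :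
      a1 * (38 * a1 ^ 2 - 171 * a1 + 93) = 0)).resolve_right (quadratic_ne_zero a1)
  rcases mul_eq_zero.mp (by linear_combination e02 / 3 - e30 / 10 : (b3 - 1) * (b3 + 1) = 0)
    with h1 | h1
  · obtain rfl : b3 = 1 := by linear_combination h1
    norm_num
  · obtain rfl : b3 = -1 := by linear_combination h1
    have f1 := h.rel24_eq 1 0 (by norm_num [rel20])
    have f2 := h.rel24_eq 1 (-2) (by norm_num [rel20])
    norm_num [rel24] at f1 f2
    linarith

theorem eq_adams {k : ℚ} (h : RelIdentities k a1 a2 b1 b2 b3 c c') :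
    a1 = 0 ∧ b1 = 0 ∧ b2 = 0 ∧ a2 = k ^ 6 ∧ b3 = k ^ 10 := by
  rcases eq_or_ne k 0 with rfl | hk
  · simpa using h.eq_zero_of_zero
  obtain ⟨h1, h2, h3, h4, h5⟩ := (h.normalize hk).eq_of_one
  simp only [div_eq_zero_iff, pow_eq_zero_iff', hk, false_and, or_false] at h1 h2 h3
  rw [div_eq_one_iff_eq (pow_ne_zero _ hk)] at h4 h5
  exact ⟨h1, h2, h3, h4, h5⟩

end RelIdentities

end E8E7

open E8E7

theorem E8_E7_rigidity_general (k a1 a2 b1 b2 b3 : ℚ)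
    (y1 y6 y10 g20 g24 g30 : MvPolynomial (Fin 3) ℚ)
    (hy1 : y1 = X 0) (hy6 : y6 = X 1) (hy10 : y10 = X 2)
    (hg20 : g20 = 3 * y10 ^ 2 + 10 * y1 ^ 2 * y6 ^ 3 + 18 * y1 ^ 4 * y6 * y10
      - 12 * y1 ^ 10 * y10 - 18 * y1 ^ 8 * y6 ^ 2 + 9 * y1 ^ 14 * y6 - y1 ^ 20)
    (hg24 : g24 = 5 * y6 ^ 4 + 30 * y1 ^ 2 * y6 ^ 2 * y10 + 15 * y1 ^ 4 * y10 ^ 2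
      - 15 * y1 ^ 14 * y10 - 15 * y1 ^ 12 * y6 ^ 2 + 10 * y1 ^ 18 * y6 - y1 ^ 24)
    (hg30 : g30 = 12 * y1 ^ 4 * y6 * y10 ^ 2 + 24 * y1 ^ 14 * y6 * y10 + 56 * y1 ^ 24 * y6
      - 36 * y1 ^ 10 * y10 ^ 2 - 32 * y10 ^ 3 + 4 * y6 ^ 5 - 9 * y1 ^ 30
      - 48 * y1 ^ 20 * y10 + 60 * y1 ^ 6 * y6 ^ 4 - 64 * y1 ^ 18 * y6 ^ 2
      + 96 * y1 ^ 8 * y10 * y6 ^ 2 - 44 * y1 ^ 12 * y6 ^ 3)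
    (I : Ideal (MvPolynomial (Fin 3) ℚ)) (hI : I = Ideal.span {g20, g24, g30})
    (φ : MvPolynomial (Fin 3) ℚ →ₐ[ℚ] MvPolynomial (Fin 3) ℚ)
    (hφ1 : φ y1 = C k * y1)
    (hφ6 : φ y6 = C a1 * y1 ^ 6 + C a2 * y6)
    (hφ10 : φ y10 = C b1 * y1 ^ 10 + C b2 * y1 ^ 4 * y6 + C b3 * y10)
    (h20 : φ g20 ∈ I) (h24 : φ g24 ∈ I) :
    a1 = 0 ∧ b1 = 0 ∧ b2 = 0 ∧ a2 = k ^ 6 ∧ b3 = k ^ 10 := by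
  subst hy1 hy6 hy10 hI
  obtain rfl : g20 = rel20 (X 0) (X 1) (X 2) := hg20
  obtain rfl : g24 = rel24 (X 0) (X 1) (X 2) := hg24
  obtain rfl : g30 = rel30 (X 0) (X 1) (X 2) := hg30
  rw [map_rel20, hφ1, hφ6, hφ10] at h20
  rw [map_rel24, hφ1, hφ6, hφ10] at h24
  have hX (i : Fin 3) : IsWeightedHomogeneous deg (X i : MvPolynomial (Fin 3) ℚ) (deg i) :=
    isWeightedHomogeneous_X ℚ deg i
  have hφX0 := (hX 0).C_mul k
  have hφX1 := (((hX 0).pow 6).C_mul a1).add ((hX 1).C_mul a2)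
  have hφX2 := ((((hX 0).pow 10).C_mul b1).add ((((hX 0).pow 4).C_mul b2).mul (hX 1))).add
    ((hX 2).C_mul b3)
  have hg20 := isWeightedHomogeneous_rel20 (hX 0) (hX 1) (hX 2)
  have hg24 := isWeightedHomogeneous_rel24 (hX 0) (hX 1) (hX 2)
  have hg30 := isWeightedHomogeneous_rel30 (hX 0) (hX 1) (hX 2)
  have hdeg : ∀ i, deg i ≠ 0 := by decide
  obtain ⟨c, hc⟩ := IsWeightedHomogeneous.exists_eq_C_mul_of_mem_span hdeg
    (isWeightedHomogeneous_rel20 hφX0 hφX1 hφX2) hg20 hg24 hg30 (by norm_num) (by norm_num) h20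
  obtain ⟨p, c', hc'⟩ := IsWeightedHomogeneous.exists_eq_mul_add_C_mul_of_mem_span hdeg
    (isWeightedHomogeneous_rel24 hφX0 hφX1 hφX2) hg20 hg24 hg30 (by norm_num) (by norm_num) h24
  refine RelIdentities.eq_adams (c := c) (c' := c') ⟨fun s t => ?_, fun s t hst => ?_⟩
  · simpa [map_rel20] using congrArg (eval ![1, s, t]) hc
  · simpa [map_rel20, map_rel24, hst] using congrArg (eval ![1, s, t]) hc'

/-- Rigidity computation for `X = E₈/E₇·S¹`. -/
theorem E8_E7_rigidity (k a1 a2 b1 b2 b3 : ℚ)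
    (y1 y6 y10 g20 g24 g30 : MvPolynomial (Fin 3) ℚ)
    (hy1 : y1 = X 0) (hy6 : y6 = X 1) (hy10 : y10 = X 2)
    (hg20 : g20 = 3 * y10 ^ 2 + 10 * y1 ^ 2 * y6 ^ 3 + 18 * y1 ^ 4 * y6 * y10
      - 12 * y1 ^ 10 * y10 - 18 * y1 ^ 8 * y6 ^ 2 + 9 * y1 ^ 14 * y6 - y1 ^ 20)
    (hg24 : g24 = 5 * y6 ^ 4 + 30 * y1 ^ 2 * y6 ^ 2 * y10 + 15 * y1 ^ 4 * y10 ^ 2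
      - 15 * y1 ^ 14 * y10 - 15 * y1 ^ 12 * y6 ^ 2 + 10 * y1 ^ 18 * y6 - y1 ^ 24)
    (hg30 : g30 = 12 * y1 ^ 4 * y6 * y10 ^ 2 + 24 * y1 ^ 14 * y6 * y10 + 56 * y1 ^ 24 * y6
      - 36 * y1 ^ 10 * y10 ^ 2 - 32 * y10 ^ 3 + 4 * y6 ^ 5 - 9 * y1 ^ 30
      - 48 * y1 ^ 20 * y10 + 60 * y1 ^ 6 * y6 ^ 4 - 64 * y1 ^ 18 * y6 ^ 2
      + 96 * y1 ^ 8 * y10 * y6 ^ 2 - 44 * y1 ^ 12 * y6 ^ 3)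
    (I : Ideal (MvPolynomial (Fin 3) ℚ)) (hI : I = Ideal.span {g20, g24, g30})
    (φ : MvPolynomial (Fin 3) ℚ →ₐ[ℚ] MvPolynomial (Fin 3) ℚ)
    (hφ1 : φ y1 = C k * y1)
    (hφ6 : φ y6 = C a1 * y1 ^ 6 + C a2 * y6)
    (hφ10 : φ y10 = C b1 * y1 ^ 10 + C b2 * y1 ^ 4 * y6 + C b3 * y10)
    (h20 : φ g20 ∈ I) (h24 : φ g24 ∈ I) (h30 : φ g30 ∈ I) :
    a1 = 0 ∧ b1 = 0 ∧ b2 = 0 ∧ a2 = k ^ 6 ∧ b3 = k ^ 10 :=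
  E8_E7_rigidity_general k a1 a2 b1 b2 b3 y1 y6 y10 g20 g24 g30 hy1 hy6 hy10 hg20 hg24 hg30 I hI φ
    hφ1 hφ6 hφ10 h20 h24
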